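/- Let G be a weak FI-group with a central filtration {G(k)} (k ≥ 1). Assume G is boundedly generated in degree A, and that for some fixed k ≥ 1 and B_k ≥ 0 we have G(k) = G(k)^{≤B_k}. Then for every N ≥ A + B_k and every finite set J ⊆ ℕ, we have [G_J, G(k)_J] ⊆ G(k+1)_J^{≤N}. -/

import Mathlib

universe u

/-- Two homomorphisms `A →* B` are conjugate if they differ by post-composition with an inner
automorphism of `B`; a *homomorphism-modulo-conjugacy* is an equivalence class for this
relation. -/
def HomConj {A B : Type*} [Group A] [Group B] (f g : A →* B) : Prop :=
  ∃ b : B, ∀ a : A, g a = b * f a * b⁻¹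

/-- The inclusion function `↥I → ↥J` of a pair of finite sets `I ⊆ J ⊆ ℕ`. -/
def finsetIncl {I J : Finset ℕ} (h : I ⊆ J) : I → J := fun x => ⟨x.1, h x.2⟩

theorem finsetIncl_injective {I J : Finset ℕ} (h : I ⊆ J) :
    Function.Injective (finsetIncl h) := by
  intro a b hab
  have h2 := congrArg (fun x : J => (x : ℕ)) hab
  exact Subtype.ext h2

/-- A **weak FI-group**: a group `G_I` for each finite subset `I ⊆ ℕ`; a
homomorphism-modulo-conjugacy `G_f : G_I → G_J` for each injection `f : I ↪ J` (presented here
by a representative homomorphism `map f`, with the compatibility conditions `G_{id} = id` and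
`G_{g∘f} = G_g ∘ G_f` holding up to conjugacy); and a genuine homomorphism `G_I^J = incl h` for
each pair `I ⊆ J`, representing `G_{i_I^J}` and satisfying `G_J^K ∘ G_I^J = G_I^K` on the
nose. -/
structure WeakFIGroup where
  G : Finset ℕ → Type u
  [grp : ∀ I, Group (G I)]
  map : ∀ {I J : Finset ℕ} (f : I → J), Function.Injective f → (G I →* G J)
  incl : ∀ {I J : Finset ℕ}, I ⊆ J → (G I →* G J)
  map_id : ∀ I : Finset ℕ, HomConj (map (id : I → I) fun _ _ h => h) (MonoidHom.id (G I))
  map_comp : ∀ {I J K : Finset ℕ} (f : I → J) (g : J → K)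
      (hf : Function.Injective f) (hg : Function.Injective g),
      HomConj (map (g ∘ f) (hg.comp hf)) ((map g hg).comp (map f hf))
  incl_represents : ∀ {I J : Finset ℕ} (h : I ⊆ J),
      HomConj (map (finsetIncl h) (finsetIncl_injective h)) (incl h)
  incl_comp : ∀ {I J K : Finset ℕ} (hIJ : I ⊆ J) (hJK : J ⊆ K),
      (incl hJK).comp (incl hIJ) = incl (hIJ.trans hJK)

attribute [instance] WeakFIGroup.grp

/-- A **normal weak FI-subgroup** `H ⊴ G`: a normal subgroup `H_I ⊴ G_I` for each finite
`I ⊆ ℕ`, with `G_f(H_I) ⊆ H_J` for every injection `f : I ↪ J` (this image is well defined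
since `H_J` is normal). -/
structure NormalWeakFISub (𝒢 : WeakFIGroup.{u}) where
  H : ∀ I : Finset ℕ, Subgroup (𝒢.G I)
  normal : ∀ I : Finset ℕ, (H I).Normal
  stable : ∀ {I J : Finset ℕ} (f : I → J) (hf : Function.Injective f),
      (H I).map (𝒢.map f hf) ≤ H J

/-- `G` is *boundedly generated in degree `A`* if for every finite set `J ⊆ ℕ`, the group
`G_J` is generated by its subgroups `G_J(I) = G_I^J(G_I)` over all `I ⊆ J` with `|I| ≤ A`. -/
def WeakFIGroup.BoundedlyGenerated (𝒢 : WeakFIGroup.{u}) (A : ℕ) : Prop :=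
  ∀ J : Finset ℕ,
    (⨆ (I : Finset ℕ) (hIJ : I ⊆ J) (_ : I.card ≤ A),
      Subgroup.map (𝒢.incl hIJ) ⊤) = (⊤ : Subgroup (𝒢.G J))

/-- `H_J^{≤N}`: the subgroup of `H_J` generated by the `G_J`-conjugates of the subgroups
`H_J(I) = G_I^J(H_I)` over all `I ⊆ J` with `|I| ≤ N`. -/
def NormalWeakFISub.leN {𝒢 : WeakFIGroup.{u}} (H : NormalWeakFISub 𝒢) (N : ℕ)
    (J : Finset ℕ) : Subgroup (𝒢.G J) :=
  Subgroup.normalClosure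
    (⋃ (I : Finset ℕ) (hIJ : I ⊆ J) (_ : I.card ≤ N),
      ((H.H I).map (𝒢.incl hIJ) : Set (𝒢.G J)))

/-- `H ⊴ G` is *boundedly normally generated in degree `B`* if for every finite set `J ⊆ ℕ`,
the group `H_J` is generated by the `G_J`-conjugates of its subgroups `H_J(I)` over all
`I ⊆ J` with `|I| ≤ B`. -/
def NormalWeakFISub.BoundedlyNormallyGenerated {𝒢 : WeakFIGroup.{u}}
    (H : NormalWeakFISub 𝒢) (B : ℕ) : Prop :=
  ∀ J : Finset ℕ, H.leN B J = H.H J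

/-- A **central filtration** `{G(k)}_{k ≥ 1}` of a weak FI-group `G`, reindexed here so that
`filt k = G(k+1)`: normal weak FI-subgroups with `G(1) = G`, `G(k) ⊇ G(k+1)`, and
`[G, G(k)] ⊆ G(k+1)` for all `k ≥ 1`. -/
structure CentralFiltration (𝒢 : WeakFIGroup.{u}) where
  filt : ℕ → NormalWeakFISub 𝒢
  filt_zero : ∀ I : Finset ℕ, (filt 0).H I = ⊤
  filt_antitone : ∀ (k : ℕ) (I : Finset ℕ), (filt (k + 1)).H I ≤ (filt k).H I
  central : ∀ (k : ℕ) (I : Finset ℕ),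
      ⁅(⊤ : Subgroup (𝒢.G I)), (filt k).H I⁆ ≤ (filt (k + 1)).H I

instance CentralFiltration.normal_subgroupOf {𝒢 : WeakFIGroup.{u}}
    (C : CentralFiltration 𝒢) (k : ℕ) (I : Finset ℕ) :
    (((C.filt (k + 1)).H I).subgroupOf ((C.filt k).H I)).Normal :=
  ((C.filt (k + 1)).normal I).subgroupOf _

/-- The central filtration has *finite rank* if each abelian group `G(k)_I ⧸ G(k+1)_I` is
finitely generated. -/
def CentralFiltration.FiniteRank {𝒢 : WeakFIGroup.{u}} (C : CentralFiltration 𝒢) : Prop :=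
  ∀ (k : ℕ) (I : Finset ℕ),
    Group.FG ((C.filt k).H I ⧸ ((C.filt (k + 1)).H I).subgroupOf ((C.filt k).H I))

/-! Modulo `M = G(k+1)_J^{≤N}`, the elements of `G_J` that are central modulo `M` form a normal
subgroup, so it suffices that every generator `G_I^J(h)` of `G(k)_J` (`h ∈ G(k)_I`, `|I| ≤ B`)
commutes modulo `M` with every generator `G_{I'}^J(a)` of `G_J` (`|I'| ≤ A`). Both come from
`G_{I' ∪ I}`, where `|I' ∪ I| ≤ A + B ≤ N` and their commutator lies in `G(k+1)_{I' ∪ I}`;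
hence it lies in `M`. -/

open scoped commutatorElement

namespace QuotientGroup

variable {G : Type*} [Group G] {M : Subgroup G} [M.Normal]

theorem commutatorElement_mem_iff_commute {x y : G} :
    ⁅x, y⁆ ∈ M ↔ Commute (x : G ⧸ M) y := by
  rw [← eq_one_iff, ← mk'_apply, map_commutatorElement, commutatorElement_eq_one_iff_commute]
  rfl

theorem commutatorElement_mem_iff_mem_comap_centralizer {x z : G} :
    ⁅x, z⁆ ∈ M ↔ x ∈ (Subgroup.centralizer {(z : G ⧸ M)}).comap (mk' M) := by
  rw [commutatorElement_mem_iff_commute, Subgroup.mem_comap,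
    Subgroup.mem_centralizer_singleton_iff]
  rfl

end QuotientGroup

theorem Subgroup.commutator_top_normalClosure_le {G : Type*} [Group G] {M : Subgroup G}
    [M.Normal] {T : Set G} (hT : ∀ x : G, ∀ t ∈ T, ⁅x, t⁆ ∈ M) :
    ⁅(⊤ : Subgroup G), normalClosure T⁆ ≤ M := by
  have hT_central : normalClosure T ≤ (center (G ⧸ M)).comap (QuotientGroup.mk' M) := by
    refine normalClosure_le_normal fun t ht => mem_center_iff.mpr fun g => ?_
    induction g using QuotientGroup.induction_on with
    | _ x => exact QuotientGroup.commutatorElement_mem_iff_commute.mp (hT x t ht)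
  rw [commutator_le]
  intro x _ y hy
  exact QuotientGroup.commutatorElement_mem_iff_commute.mpr (mem_center_iff.mp (hT_central hy) x)

theorem WeakFIGroup.BoundedlyGenerated.eq_top_of_forall_incl_mem {𝒢 : WeakFIGroup.{u}} {A : ℕ}
    (hBG : 𝒢.BoundedlyGenerated A) {J : Finset ℕ} {K : Subgroup (𝒢.G J)}
    (hK : ∀ (I : Finset ℕ) (hIJ : I ⊆ J), I.card ≤ A → ∀ a, 𝒢.incl hIJ a ∈ K) : K = ⊤ :=
  top_unique <| hBG J ▸ iSup₂_le fun I hIJ => iSup_le fun hI => by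
    rintro _ ⟨a, -, rfl⟩
    exact hK I hIJ hI a

theorem WeakFIGroup.incl_incl (𝒢 : WeakFIGroup.{u}) {I J K : Finset ℕ} (hIJ : I ⊆ J)
    (hJK : J ⊆ K) (x : 𝒢.G I) : 𝒢.incl hJK (𝒢.incl hIJ x) = 𝒢.incl (hIJ.trans hJK) x := by
  rw [← MonoidHom.comp_apply, 𝒢.incl_comp]

namespace NormalWeakFISub

variable {𝒢 : WeakFIGroup.{u}} (H : NormalWeakFISub 𝒢) {I J : Finset ℕ}

/-- `G_I^J` represents `G_{i_I^J}` only up to conjugation, which `H_J` absorbs by normality. -/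
theorem map_incl_le (hIJ : I ⊆ J) : (H.H I).map (𝒢.incl hIJ) ≤ H.H J := by
  obtain ⟨b, hb⟩ := 𝒢.incl_represents hIJ
  rintro _ ⟨y, hy, rfl⟩
  rw [hb]
  exact (H.normal J).conj_mem _ (H.stable _ (finsetIncl_injective hIJ) ⟨y, hy, rfl⟩) b

instance normal_leN (N : ℕ) (J : Finset ℕ) : (H.leN N J).Normal :=
  Subgroup.normalClosure_normal

theorem map_incl_le_leN {N : ℕ} (hIJ : I ⊆ J) (hI : I.card ≤ N) :
    (H.H I).map (𝒢.incl hIJ) ≤ H.leN N J := fun _ hx =>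
  Subgroup.subset_normalClosure <| Set.mem_iUnion₂.mpr ⟨I, hIJ, Set.mem_iUnion.mpr ⟨hI, hx⟩⟩

end NormalWeakFISub

theorem CentralFiltration.commutatorElement_incl_mem_leN {𝒢 : WeakFIGroup.{u}}
    (C : CentralFiltration 𝒢) (k : ℕ) {N : ℕ} {I I' J : Finset ℕ} (hI'J : I' ⊆ J)
    (hIJ : I ⊆ J) (hcard : (I' ∪ I).card ≤ N) (a : 𝒢.G I') {h : 𝒢.G I}
    (hh : h ∈ (C.filt k).H I) :
    ⁅𝒢.incl hI'J a, 𝒢.incl hIJ h⁆ ∈ (C.filt (k + 1)).leN N J := by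
  have hLJ : I' ∪ I ⊆ J := Finset.union_subset hI'J hIJ
  have hI'L : I' ⊆ I' ∪ I := Finset.subset_union_left
  have hIL : I ⊆ I' ∪ I := Finset.subset_union_right
  have hcomm : ⁅𝒢.incl hI'L a, 𝒢.incl hIL h⁆ ∈ (C.filt (k + 1)).H (I' ∪ I) :=
    C.central k _ (Subgroup.commutator_mem_commutator (Subgroup.mem_top _)
      ((C.filt k).map_incl_le hIL ⟨h, hh, rfl⟩))
  rw [← 𝒢.incl_incl hI'L hLJ, ← 𝒢.incl_incl hIL hLJ, ← map_commutatorElement]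
  exact (C.filt (k + 1)).map_incl_le_leN hLJ hcard ⟨_, hcomm, rfl⟩

/-- **Claim 1 of the proof of Theorem F.**  Let `G` be a weak FI-group with a central
filtration `{G(k)}` (here `C.filt k = G(k+1)`, so the pair `(C.filt k, C.filt (k+1))`
ranges over all consecutive pairs `(G(k), G(k+1))` with `k ≥ 1`).  Assume `G` is boundedly
generated in degree `A` and that `G(k) = G(k)^{≤B}`.  Then for every `N ≥ A + B` and every
finite set `J ⊆ ℕ`, we have `[G_J, G(k)_J] ⊆ G(k+1)_J^{≤N}`. -/
theorem stmt18 (𝒢 : WeakFIGroup.{u}) (C : CentralFiltration 𝒢) (A B k : ℕ)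
    (hBG : 𝒢.BoundedlyGenerated A)
    (hB : ∀ J : Finset ℕ, (C.filt k).leN B J = (C.filt k).H J) :
    ∀ N : ℕ, A + B ≤ N → ∀ J : Finset ℕ,
      ⁅(⊤ : Subgroup (𝒢.G J)), (C.filt k).H J⁆ ≤ (C.filt (k + 1)).leN N J := by
  intro N hN J
  rw [← hB J]
  refine Subgroup.commutator_top_normalClosure_le fun x t ht => ?_
  simp only [Set.mem_iUnion, SetLike.mem_coe, Subgroup.mem_map] at ht
  obtain ⟨I, hIJ, hI, h, hh, rfl⟩ := ht
  have h_centralizes := hBG.eq_top_of_forall_incl_mem fun I' hI'J hI' a =>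
    QuotientGroup.commutatorElement_mem_iff_mem_comap_centralizer.mp <|
      C.commutatorElement_incl_mem_leN k (N := N) hI'J hIJ
        ((Finset.card_union_le I' I).trans (by omega)) a hh
  exact QuotientGroup.commutatorElement_mem_iff_mem_comap_centralizer.mpr
    (h_centralizes ▸ Subgroup.mem_top x)
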